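/- Let c : ℝ → ℝ be continuously differentiable with c(x) > 0 for all x, let τ : ℝ → ℝ be twice continuously differentiable with τ'(x) = √(c(x)) for all x, and let u : ℝ × ℝ → ℝ be twice continuously differentiable and satisfy c(x)·∂ₜₜu(x,t) = ∂ₓₓu(x,t) for all (x,t) ∈ ℝ². Define q(x,t) = u(x, t + τ(x)) and assume in addition that q(x,0) = 1/(2·c(x)^{1/4}) for all x ∈ ℝ. Then for all (x,t) ∈ ℝ²: ∂ₓₓq(x,t) − ∂ₜ∂ₓq(x,t)/(2·q(x,0)²) + ∂ₜq(x,t)·(d/dx)[q(x,0)]/(2·q(x,0)³) = 0. -/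

import Mathlib

/-!
Along the sheared coordinates `(x, t + τ x)` the chain rule gives
`q_xx - 2 τ' q_xt - τ'' q_t = u_xx - τ'² u_tt`, and the right side vanishes by the wave equation
since `τ'² = c`. The trace relation says `τ' = √c = 1 / (4 q(x,0)²)`; differentiating it gives
`τ'' = -∂ₓq(x,0) / (2 q(x,0)³)`, and substituting both coefficients yields (3.6).
-/

section Curves

variable {E F : Type*} [NormedAddCommGroup E] [NormedSpace ℝ E]
  [NormedAddCommGroup F] [NormedSpace ℝ F] {u : E → F}

theorem hasDerivAt_fderiv_comp_apply {γ w : ℝ → E} {γ' w' : E} {s : ℝ}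
    (hu : DifferentiableAt ℝ (fderiv ℝ u) (γ s)) (hγ : HasDerivAt γ γ' s)
    (hw : HasDerivAt w w' s) :
    HasDerivAt (fun r => fderiv ℝ u (γ r) (w r))
      (fderiv ℝ (fderiv ℝ u) (γ s) γ' (w s) + fderiv ℝ u (γ s) w') s :=
  (hu.hasFDerivAt.comp_hasDerivAt s hγ).clm_apply hw

theorem deriv_deriv_comp_curve {γ γ' : ℝ → E} {γ'' : E} {s : ℝ}
    (hu : Differentiable ℝ u) (hu' : DifferentiableAt ℝ (fderiv ℝ u) (γ s))
    (hγ : ∀ r, HasDerivAt γ (γ' r) r) (hγ' : HasDerivAt γ' γ'' s) :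
    deriv (fun r => deriv (fun r' => u (γ r')) r) s
      = fderiv ℝ (fderiv ℝ u) (γ s) (γ' s) (γ' s) + fderiv ℝ u (γ s) γ'' := by
  have hfirst : (fun r => deriv (fun r' => u (γ r')) r) = fun r => fderiv ℝ u (γ r) (γ' r) :=
    funext fun r => ((hu (γ r)).hasFDerivAt.comp_hasDerivAt r (hγ r)).deriv
  rw [hfirst]
  exact (hasDerivAt_fderiv_comp_apply hu' (hγ s) hγ').deriv

end Curves

theorem ContinuousLinearMap.apply_prod_apply_prod (B : ℝ × ℝ →L[ℝ] ℝ × ℝ →L[ℝ] ℝ) (a b c d : ℝ) :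
    B (a, b) (c, d) = a * c * B (1, 0) (1, 0) + a * d * B (1, 0) (0, 1)
      + b * c * B (0, 1) (1, 0) + b * d * B (0, 1) (0, 1) := by
  have h : ∀ a b : ℝ, ((a, b) : ℝ × ℝ) = a • (1, 0) + b • (0, 1) := fun a b => by
    ext <;> simp
  rw [h a b, h c d]
  simp only [map_add, map_smul, add_apply, smul_apply, smul_eq_mul]
  ring

theorem ContinuousLinearMap.apply_prod (L : ℝ × ℝ →L[ℝ] ℝ) (a b : ℝ) :
    L (a, b) = a * L (1, 0) + b * L (0, 1) := by
  rw [← smul_eq_mul, ← smul_eq_mul, ← map_smul, ← map_smul, ← map_add]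
  congr 1; ext <;> simp

section Shear

variable {u : ℝ × ℝ → ℝ} {τ : ℝ → ℝ} {x : ℝ}

theorem hasDerivAt_shear_fst (hτ : DifferentiableAt ℝ τ x) (t : ℝ) :
    HasDerivAt (fun y => (y, t + τ y)) ((1 : ℝ), deriv τ x) x :=
  (hasDerivAt_id' x).prodMk (hτ.hasDerivAt.const_add t)

theorem hasDerivAt_shear_snd (x a t : ℝ) :
    HasDerivAt (fun s => (x, s + a)) ((0 : ℝ), (1 : ℝ)) t :=
  (hasDerivAt_const t x).prodMk ((hasDerivAt_id' t).add_const a)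

theorem shear_wave_identity (hu : ContDiff ℝ 2 u) (hτ : Differentiable ℝ τ)
    (hτ' : DifferentiableAt ℝ (deriv τ) x) (t : ℝ) :
    deriv (fun y => deriv (fun y' => u (y', t + τ y')) y) x
      - 2 * deriv τ x * deriv (fun s => deriv (fun y => u (y, s + τ y)) x) t
      - deriv (deriv τ) x * deriv (fun s => u (x, s + τ x)) t
    = deriv (fun y => deriv (fun y' => u (y', t + τ x)) y) x
      - deriv τ x ^ 2 * deriv (fun s => deriv (fun s' => u (x, s')) s) (t + τ x) := by
  have hu1 : Differentiable ℝ u := hu.differentiable two_ne_zero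
  have hu2 : Differentiable ℝ (fderiv ℝ u) :=
    (hu.fderiv_right (m := 1) le_rfl).differentiable one_ne_zero
  set p : ℝ × ℝ := (x, t + τ x)
  set D2 := fderiv ℝ (fderiv ℝ u) p
  have q_xx : deriv (fun y => deriv (fun y' => u (y', t + τ y')) y) x
      = D2 (1, deriv τ x) (1, deriv τ x) + fderiv ℝ u p (0, deriv (deriv τ) x) :=
    deriv_deriv_comp_curve hu1 (hu2 _) (fun y => hasDerivAt_shear_fst (hτ y) t)
      ((hasDerivAt_const x (1 : ℝ)).prodMk hτ'.hasDerivAt)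
  have q_xt :
      deriv (fun s => deriv (fun y => u (y, s + τ y)) x) t = D2 (0, 1) (1, deriv τ x) := by
    have hinner : (fun s => deriv (fun y => u (y, s + τ y)) x)
        = fun s => fderiv ℝ u (x, s + τ x) (1, deriv τ x) :=
      funext fun s =>
        ((hu1 _).hasFDerivAt.comp_hasDerivAt x (hasDerivAt_shear_fst (hτ x) s)).deriv
    rw [hinner]
    simpa using (hasDerivAt_fderiv_comp_apply (hu2 _) (hasDerivAt_shear_snd x (τ x) t)
      (hasDerivAt_const t ((1 : ℝ), deriv τ x))).deriv
  have q_t : deriv (fun s => u (x, s + τ x)) t = fderiv ℝ u p (0, 1) :=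
    ((hu1 _).hasFDerivAt.comp_hasDerivAt t (hasDerivAt_shear_snd x (τ x) t)).deriv
  have u_xx : deriv (fun y => deriv (fun y' => u (y', t + τ x)) y) x = D2 (1, 0) (1, 0) := by
    simpa using deriv_deriv_comp_curve (γ := fun y => (y, t + τ x))
      (γ' := fun _ => ((1 : ℝ), (0 : ℝ))) hu1 (hu2 p)
      (fun y => (hasDerivAt_id' y).prodMk (hasDerivAt_const y (t + τ x))) (hasDerivAt_const x _)
  have u_tt : deriv (fun s => deriv (fun s' => u (x, s')) s) (t + τ x) = D2 (0, 1) (0, 1) := by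
    simpa using deriv_deriv_comp_curve (γ := fun s => (x, s))
      (γ' := fun _ => ((0 : ℝ), (1 : ℝ))) hu1 (hu2 p)
      (fun s => (hasDerivAt_const s x).prodMk (hasDerivAt_id' s)) (hasDerivAt_const (t + τ x) _)
  have hsymm : D2 (1, 0) (0, 1) = D2 (0, 1) (1, 0) :=
    (hu.contDiffAt.isSymmSndFDerivAt (by simp)) _ _
  rw [q_xx, q_xt, q_t, u_xx, u_tt, D2.apply_prod_apply_prod,
    (D2 (0, 1)).apply_prod 1 (deriv τ x), (fderiv ℝ u p).apply_prod 0, hsymm]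
  ring

end Shear

theorem Real.rpow_one_div_four_sq {a : ℝ} (ha : 0 ≤ a) : (a ^ ((1 : ℝ) / 4)) ^ 2 = √a := by
  rw [← Real.rpow_natCast, ← Real.rpow_mul ha, Real.sqrt_eq_rpow]
  norm_num

theorem HasDerivAt.one_div_four_mul_sq {f : ℝ → ℝ} {f' x : ℝ} (hf : HasDerivAt f f' x)
    (hx : f x ≠ 0) : HasDerivAt (fun y => 1 / (4 * f y ^ 2)) (-f' / (2 * f x ^ 3)) x :=
  ((hasDerivAt_const x (1 : ℝ)).fun_div ((hf.fun_pow 2).const_mul 4) (by positivity)).congr_deriv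
    (by field_simp; ring)

theorem nonlinear_nonlocal_pde_general
    (c τ : ℝ → ℝ) (u q : ℝ × ℝ → ℝ)
    (hcpos : ∀ x : ℝ, 0 < c x)
    (hτ : ContDiff ℝ 2 τ) (hτ' : ∀ x : ℝ, deriv τ x = Real.sqrt (c x))
    (hu : ContDiff ℝ 2 u)
    (hwave : ∀ x t : ℝ,
      c x * deriv (fun s => deriv (fun s' => u (x, s')) s) t
        = deriv (fun y => deriv (fun y' => u (y', t)) y) x)
    (hq : ∀ x t : ℝ, q (x, t) = u (x, t + τ x))
    (hq0 : ∀ x : ℝ, q (x, 0) = 1 / (2 * (c x) ^ ((1 : ℝ) / 4))) :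
    ∀ x t : ℝ,
      deriv (fun y => deriv (fun y' => q (y', t)) y) x
        - deriv (fun s => deriv (fun y => q (y, s)) x) t / (2 * (q (x, 0)) ^ 2)
        + deriv (fun s => q (x, s)) t * deriv (fun y => q (y, 0)) x
            / (2 * (q (x, 0)) ^ 3) = 0 := by
  intro x t
  have hτd : Differentiable ℝ τ := hτ.differentiable two_ne_zero
  have hq0_ne : ∀ y, q (y, 0) ≠ 0 := fun y => by
    rw [hq0]
    have := hcpos y
    positivity
  have hτ'_q0 : deriv τ = fun y => 1 / (4 * q (y, 0) ^ 2) := funext fun y => by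
    rw [hτ', hq0, ← Real.rpow_one_div_four_sq (hcpos y).le]
    field_simp
    ring
  have hq0_diff : Differentiable ℝ (fun y => q (y, 0)) := by
    have hu1 : Differentiable ℝ u := hu.differentiable two_ne_zero
    simp only [hq]
    fun_prop
  have hτ'' : HasDerivAt (deriv τ)
      (-deriv (fun y => q (y, 0)) x / (2 * q (x, 0) ^ 3)) x := by
    rw [hτ'_q0]
    exact (hq0_diff x).hasDerivAt.one_div_four_mul_sq (hq0_ne x)
  have hwave_p : deriv (fun y => deriv (fun y' => u (y', t + τ x)) y) x
      - deriv τ x ^ 2 * deriv (fun s => deriv (fun s' => u (x, s')) s) (t + τ x) = 0 := by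
    rw [hτ' x, Real.sq_sqrt (hcpos x).le, hwave, sub_self]
  have hshear := shear_wave_identity hu hτd hτ''.differentiableAt t
  rw [hwave_p, hτ''.deriv, hτ'_q0] at hshear
  simp only [← hq] at hshear
  linear_combination hshear

/-- Equation (3.6): the nonlinear PDE with nonlocal terms satisfied by
`q(x,t) = u(x, t + τ(x))` when `τ' = √c`, `c·u_tt = u_xx` and
`q(x,0) = 1/(2·c(x)^{1/4})`. -/
theorem nonlinear_nonlocal_pde
    (c τ : ℝ → ℝ) (u q : ℝ × ℝ → ℝ)
    (hc : ContDiff ℝ 1 c) (hcpos : ∀ x : ℝ, 0 < c x)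
    (hτ : ContDiff ℝ 2 τ) (hτ' : ∀ x : ℝ, deriv τ x = Real.sqrt (c x))
    (hu : ContDiff ℝ 2 u)
    (hwave : ∀ x t : ℝ,
      c x * deriv (fun s => deriv (fun s' => u (x, s')) s) t
        = deriv (fun y => deriv (fun y' => u (y', t)) y) x)
    (hq : ∀ x t : ℝ, q (x, t) = u (x, t + τ x))
    (hq0 : ∀ x : ℝ, q (x, 0) = 1 / (2 * (c x) ^ ((1 : ℝ) / 4))) :
    ∀ x t : ℝ,
      deriv (fun y => deriv (fun y' => q (y', t)) y) x
        - deriv (fun s => deriv (fun y => q (y, s)) x) t / (2 * (q (x, 0)) ^ 2)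
        + deriv (fun s => q (x, s)) t * deriv (fun y => q (y, 0)) x
            / (2 * (q (x, 0)) ^ 3) = 0 :=
  nonlinear_nonlocal_pde_general c τ u q hcpos hτ hτ' hu hwave hq hq0
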